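/- arXiv:2303.05129 — 2 statements merged into one kernel-verified Lean document; each statement's English description precedes it below -/
import Mathlib

section
/- Let (Λ, k), (Θ, u) be basis elements with u < k, λ_u ≥ 1, and Γ = Λ − e_u + Θ. If lev_i(Λ, k) ≤ i and lev_j(Θ, u) ≤ j for some i, j ≥ −1, then WD(Γ, k) ≤ min(WD(Λ, k), WD(Θ, u)), with equality if and only if (Θ, u) is the element ∂_1, i.e., Θ = 0 and u = 1. -/
/-- Weight of a partition (finitely supported sequence of multiplicities). -/
def wt (Λ : ℕ →₀ ℕ) : ℕ := Λ.sum fun m c => m * c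

/-- Degree (number of parts, with multiplicity) of a partition. -/
def deg (Λ : ℕ →₀ ℕ) : ℕ := Λ.sum fun _ c => c

/-- Basis element of the integral Lie ring of partitions: a pair (Λ, k) with
1 ≤ k ≤ n and all parts of Λ in {1,…,k-1}. -/
def IsBasisElt (n : ℕ) (Λ : ℕ →₀ ℕ) (k : ℕ) : Prop :=
  1 ≤ k ∧ k ≤ n ∧ Λ 0 = 0 ∧ ∀ m, k ≤ m → Λ m = 0

/-- The weight-degree function. -/
def WD (n : ℕ) (Λ : ℕ →₀ ℕ) (k : ℕ) : ℤ :=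
  (wt Λ : ℤ) - (deg Λ : ℤ) + (n : ℤ) - (k : ℤ)

/-- h_i = ⌊(i-1)/(n-1)⌋ + 1. -/
def hh (n : ℕ) (i : ℤ) : ℤ := (i - 1).fdiv ((n : ℤ) - 1) + 1

/-- r_i = i - (h_i - 1)(n-1). -/
def rr (n : ℕ) (i : ℤ) : ℤ := i - (hh n i - 1) * ((n : ℤ) - 1)

/-- The i-th level function lev_i(Λ,k) = h_i·WD(Λ,k) + deg(Λ) - 1. -/
def lev (n : ℕ) (i : ℤ) (Λ : ℕ →₀ ℕ) (k : ℕ) : ℤ :=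
  hh n i * WD n Λ k + (deg Λ : ℤ) - 1

/-- N_i = set of basis elements with lev_j ≤ j for some -1 ≤ j ≤ i. -/
def Nset (n : ℕ) (i : ℤ) : Set ((ℕ →₀ ℕ) × ℕ) :=
  {p | IsBasisElt n p.1 p.2 ∧ ∃ j : ℤ, -1 ≤ j ∧ j ≤ i ∧ lev n j p.1 p.2 ≤ j}

/-- L_i = set of basis elements for which i is the least index j ≥ -1 with lev_j = j. -/
def Lset (n : ℕ) (i : ℤ) : Set ((ℕ →₀ ℕ) × ℕ) :=
  {p | IsBasisElt n p.1 p.2 ∧ lev n i p.1 p.2 = i ∧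
    ∀ j : ℤ, -1 ≤ j → lev n j p.1 p.2 = j → i ≤ j}

/-- The partition function p(s). -/
def pfun (s : ℕ) : ℕ := Fintype.card (Nat.Partition s)

/-- b_m = Σ_{s=0}^m p(s). -/
def bnat (m : ℕ) : ℕ := ∑ s ∈ Finset.range (m + 1), pfun s

/-- c_m = Σ_{s=0}^m b_s. -/
def cnat (m : ℕ) : ℕ := ∑ s ∈ Finset.range (m + 1), bnat s

/-- b extended to ℤ, with b_m = 0 for m < 0. -/
def bint (m : ℤ) : ℕ := if m < 0 then 0 else bnat m.toNat

/-- The period map per(Λ,k) = (Λ + (n-1-WD(Λ,k))·e₁, k). -/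
noncomputable def per (n : ℕ) (p : (ℕ →₀ ℕ) × ℕ) : (ℕ →₀ ℕ) × ℕ :=
  (p.1 + Finsupp.single 1 (((n : ℤ) - 1 - WD n p.1 p.2).toNat), p.2)

/-
WD is additive up to the constant n - 1 along Γ = Λ - e_u + Θ, so both claims reduce to
WD ≤ n - 1 for lev-bounded basis elements, with equality only at ∂_1 = (0, 1). Rearranging
lev_j ≤ j ≤ h_j (n - 1) gives h_j (WD - (n - 1)) ≤ 1 - deg with h_j ≥ 0, so WD ≥ n - 1 forces
deg ≤ 1, and a single part smaller than k already gives WD ≤ n - 2. As u ≥ 1 forces k ≥ 2,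
(Λ, k) is never ∂_1; hence WD(Γ, k) < WD(Θ, u), and equality with the minimum means
WD(Θ, u) = n - 1.
-/

open Finsupp

lemma deg_eq_degree (Λ : ℕ →₀ ℕ) : deg Λ = Λ.degree := rfl

lemma deg_add (Λ Θ : ℕ →₀ ℕ) : deg (Λ + Θ) = deg Λ + deg Θ :=
  map_add degree Λ Θ

lemma deg_eq_zero_iff {Λ : ℕ →₀ ℕ} : deg Λ = 0 ↔ Λ = 0 :=
  degree_eq_zero_iff Λ

lemma wt_add (Λ Θ : ℕ →₀ ℕ) : wt (Λ + Θ) = wt Λ + wt Θ :=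
  sum_add_index' (fun _ => mul_zero _) fun _ _ _ => mul_add _ _ _

lemma wt_single (u c : ℕ) : wt (single u c) = u * c :=
  sum_single_index (mul_zero u)

lemma wt_zero : wt 0 = 0 := sum_zero_index

lemma wt_add_deg_le_mul_deg {Λ : ℕ →₀ ℕ} {k : ℕ} (hΛ : ∀ m, k ≤ m → Λ m = 0) :
    wt Λ + deg Λ ≤ k * deg Λ := by
  rw [wt, deg, sum, sum, ← Finset.sum_add_distrib, Finset.mul_sum]
  refine Finset.sum_le_sum fun m hm => ?_
  have hmk : m < k := lt_of_not_ge fun hkm => mem_support_iff.mp hm (hΛ m hkm)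
  calc m * Λ m + Λ m = (m + 1) * Λ m := by ring
    _ ≤ k * Λ m := Nat.mul_le_mul_right _ hmk

lemma WD_add_tsub_single (n k : ℕ) {Λ : ℕ →₀ ℕ} (Θ : ℕ →₀ ℕ) {u : ℕ} (hu : 1 ≤ Λ u) :
    WD n (Λ + Θ - single u 1) k = WD n Λ k + WD n Θ u - ((n : ℤ) - 1) := by
  have hle : single u 1 ≤ Λ + Θ := by
    rw [single_le_iff, Finsupp.add_apply]
    omega
  have hsplit := tsub_add_cancel_of_le hle
  have hwt := congrArg wt hsplit
  have hdeg := congrArg deg hsplit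
  rw [wt_add, wt_add, wt_single] at hwt
  rw [deg_add, deg_add, deg_eq_degree (single u 1), degree_single] at hdeg
  unfold WD
  omega

lemma WD_zero_one (n : ℕ) : WD n 0 1 = (n : ℤ) - 1 := by
  simp [WD, wt_zero, deg_eq_degree]

lemma hh_nonneg {n : ℕ} (hn : 3 ≤ n) {j : ℤ} (hj : -1 ≤ j) : 0 ≤ hh n j := by
  have hb : (0 : ℤ) < (n : ℤ) - 1 := by omega
  have : -1 ≤ (j - 1) / ((n : ℤ) - 1) := (Int.le_ediv_iff_mul_le hb).mpr (by omega)
  rw [hh, Int.fdiv_eq_ediv_of_nonneg _ hb.le]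
  omega

lemma le_hh_mul {n : ℕ} (hn : 2 ≤ n) (j : ℤ) : j ≤ hh n j * ((n : ℤ) - 1) := by
  have hb : (0 : ℤ) < (n : ℤ) - 1 := by omega
  have := Int.lt_ediv_add_one_mul_self (j - 1) hb
  rw [hh, Int.fdiv_eq_ediv_of_nonneg _ hb.le]
  omega

lemma hh_mul_WD_sub_le {n : ℕ} (hn : 2 ≤ n) {j : ℤ} {Λ : ℕ →₀ ℕ} {k : ℕ}
    (hlev : lev n j Λ k ≤ j) :
    hh n j * (WD n Λ k - ((n : ℤ) - 1)) ≤ 1 - deg Λ := by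
  unfold lev at hlev
  linarith [le_hh_mul hn j]

lemma WD_lt_of_lev_le {n : ℕ} (hn : 3 ≤ n) {Λ : ℕ →₀ ℕ} {k : ℕ} (hk : 1 ≤ k)
    (hΛ : ∀ m, k ≤ m → Λ m = 0) {j : ℤ} (hj : -1 ≤ j) (hlev : lev n j Λ k ≤ j)
    (hne : ¬(Λ = 0 ∧ k = 1)) :
    WD n Λ k < (n : ℤ) - 1 := by
  by_contra! hge
  have hdeg : (deg Λ : ℤ) ≤ 1 := by
    nlinarith [hh_nonneg hn hj, hh_mul_WD_sub_le (by omega) hlev]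
  have hwt := wt_add_deg_le_mul_deg hΛ
  unfold WD at hge
  rcases (by omega : deg Λ = 0 ∨ deg Λ = 1) with h0 | h1
  · obtain rfl := deg_eq_zero_iff.mp h0
    rw [wt_zero] at hge
    exact hne ⟨rfl, by omega⟩
  · rw [h1] at hwt hge
    omega

lemma WD_le_of_lev_le {n : ℕ} (hn : 3 ≤ n) {Λ : ℕ →₀ ℕ} {k : ℕ} (hk : 1 ≤ k)
    (hΛ : ∀ m, k ≤ m → Λ m = 0) {j : ℤ} (hj : -1 ≤ j) (hlev : lev n j Λ k ≤ j) :
    WD n Λ k ≤ (n : ℤ) - 1 := by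
  by_cases h : Λ = 0 ∧ k = 1
  · rw [h.1, h.2, WD_zero_one]
  · exact (WD_lt_of_lev_le hn hk hΛ hj hlev h).le

lemma WD_eq_iff_of_lev_le {n : ℕ} (hn : 3 ≤ n) {Λ : ℕ →₀ ℕ} {k : ℕ} (hk : 1 ≤ k)
    (hΛ : ∀ m, k ≤ m → Λ m = 0) {j : ℤ} (hj : -1 ≤ j) (hlev : lev n j Λ k ≤ j) :
    WD n Λ k = (n : ℤ) - 1 ↔ Λ = 0 ∧ k = 1 := by
  refine ⟨fun h => ?_, fun h => by rw [h.1, h.2, WD_zero_one]⟩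
  by_contra hne
  exact (WD_lt_of_lev_le hn hk hΛ hj hlev hne).ne h

theorem stmt7 (n : ℕ) (hn : 3 ≤ n) (Λ Θ : ℕ →₀ ℕ) (k u : ℕ)
    (hΛ : IsBasisElt n Λ k) (hΘ : IsBasisElt n Θ u) (huk : u < k) (hu : 1 ≤ Λ u)
    (i j : ℤ) (hi : -1 ≤ i) (hj : -1 ≤ j)
    (hlevΛ : lev n i Λ k ≤ i) (hlevΘ : lev n j Θ u ≤ j) :
    WD n (Λ + Θ - Finsupp.single u 1) k ≤ min (WD n Λ k) (WD n Θ u) ∧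
    (WD n (Λ + Θ - Finsupp.single u 1) k = min (WD n Λ k) (WD n Θ u) ↔
      Θ = 0 ∧ u = 1) := by
  obtain ⟨hk, -, -, hΛparts⟩ := hΛ
  obtain ⟨hu1, -, -, hΘparts⟩ := hΘ
  have hΛlt : WD n Λ k < (n : ℤ) - 1 :=
    WD_lt_of_lev_le hn hk hΛparts hi hlevΛ fun h => by omega
  have hΘle := WD_le_of_lev_le hn hu1 hΘparts hj hlevΘ
  rw [WD_add_tsub_single n k Θ hu, ← WD_eq_iff_of_lev_le hn hu1 hΘparts hj hlevΘ]
  refine ⟨le_min (by linarith) (by linarith), ?_⟩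
  rcases min_cases (WD n Λ k) (WD n Θ u) with ⟨hmin, -⟩ | ⟨hmin, -⟩ <;> rw [hmin] <;> omega
end

section
/- If t ≥ 0 satisfies r_t = 1 (i.e., t ≡ 1 mod (n−1)), then L_t consists of the single basis element (Λ, n) where Λ has λ_1 = t + 1 and no other parts (i.e., x_1^{t+1} ∂_n). -/
/-!
An element of `L_i` with `i ≥ 1` has `WD < r_i`: otherwise `i - WD` is a smaller index `j ≥ -1`
with `h_j = h_i - 1` and `lev_j = j`. For `r_t = 1` this forces `WD = 0`, i.e. `k = n` and
`wt Λ = deg Λ`, so every part of `Λ` equals `1`; then `lev_j = deg Λ - 1` for every `j`, which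
pins down `deg Λ = t + 1`.
-/

open Finsupp

section Partition

variable {Λ : ℕ →₀ ℕ}

lemma wt_single_one (c : ℕ) : wt (single 1 c) = c := by
  simp [wt, sum_single_index]

lemma deg_single (m c : ℕ) : deg (single m c) = c :=
  sum_single_index rfl

lemma le_mul_of_mem_support (h0 : Λ 0 = 0) {m : ℕ} (hm : m ∈ Λ.support) : Λ m ≤ m * Λ m := by
  have : m ≠ 0 := by rintro rfl; exact mem_support_iff.mp hm h0
  exact Nat.le_mul_of_pos_left _ (Nat.pos_of_ne_zero this)

lemma deg_le_wt (h0 : Λ 0 = 0) : deg Λ ≤ wt Λ :=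
  Finset.sum_le_sum fun _ hm => le_mul_of_mem_support h0 hm

lemma eq_single_one_of_wt_eq_deg (h0 : Λ 0 = 0) (h : wt Λ = deg Λ) :
    Λ = single 1 (Λ 1) := by
  have hparts : ∀ m ∈ Λ.support, Λ m = m * Λ m :=
    (Finset.sum_eq_sum_iff_of_le fun _ hm => le_mul_of_mem_support h0 hm).mp h.symm
  ext m
  rcases eq_or_ne m 1 with rfl | hm1
  · simp
  rw [single_eq_of_ne hm1]
  by_contra hm
  have := hparts m (mem_support_iff.mpr hm)
  exact hm1 (Nat.eq_of_mul_eq_mul_right (Nat.pos_of_ne_zero hm) (by omega))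

end Partition

section WeightDegree

variable {n k : ℕ} {Λ : ℕ →₀ ℕ}

lemma WD_nonneg (hb : IsBasisElt n Λ k) : 0 ≤ WD n Λ k := by
  obtain ⟨-, hkn, h0, -⟩ := hb
  have := deg_le_wt h0
  unfold WD
  omega

lemma WD_eq_zero_iff (hb : IsBasisElt n Λ k) : WD n Λ k = 0 ↔ wt Λ = deg Λ ∧ k = n := by
  obtain ⟨-, hkn, h0, -⟩ := hb
  have := deg_le_wt h0
  unfold WD
  omega

lemma mem_Lset_iff_of_WD_eq_zero {i : ℤ} (hb : IsBasisElt n Λ k)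
    (hw : WD n Λ k = 0) : (Λ, k) ∈ Lset n i ↔ i = deg Λ - 1 := by
  have hlev : ∀ j, lev n j Λ k = deg Λ - 1 := fun j => by simp [lev, hw]
  simp only [Lset, Set.mem_ofPred_eq, hlev]
  constructor
  · rintro ⟨-, h, -⟩
    exact h.symm
  · rintro rfl
    exact ⟨hb, rfl, fun j _ hj => hj.le⟩

end WeightDegree

section Levels

variable {n : ℕ}

lemma hh_sub_one_mul_add_rr (n : ℕ) (i : ℤ) : (hh n i - 1) * ((n : ℤ) - 1) + rr n i = i := by
  unfold rr
  ring

lemma hh_eq_ediv (i : ℤ) (hn : 1 ≤ n) : hh n i = (i - 1) / ((n : ℤ) - 1) + 1 := by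
  rw [hh, Int.fdiv_eq_ediv_of_nonneg _ (by omega)]

lemma rr_eq_emod (i : ℤ) (hn : 1 ≤ n) : rr n i = (i - 1) % ((n : ℤ) - 1) + 1 := by
  rw [rr, hh_eq_ediv i hn, Int.emod_def]
  ring

lemma one_le_rr (i : ℤ) (hn : 2 ≤ n) : 1 ≤ rr n i := by
  rw [rr_eq_emod i (by omega)]
  linarith [Int.emod_nonneg (i - 1) (b := (n : ℤ) - 1) (by omega)]

lemma rr_le (i : ℤ) (hn : 2 ≤ n) : rr n i ≤ (n : ℤ) - 1 := by
  rw [rr_eq_emod i (by omega)]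
  linarith [Int.emod_lt_of_pos (i - 1) (b := (n : ℤ) - 1) (by omega)]

lemma one_le_hh {i : ℤ} (hi : 1 ≤ i) (hn : 1 ≤ n) : 1 ≤ hh n i := by
  rw [hh_eq_ediv i hn]
  linarith [Int.ediv_nonneg (a := i - 1) (b := (n : ℤ) - 1) (by omega) (by omega)]

lemma hh_sub_one_mul_add (hn : 2 ≤ n) (h : ℤ) {r : ℤ} (hr1 : 1 ≤ r) (hr2 : r ≤ (n : ℤ) - 1) :
    hh n ((h - 1) * ((n : ℤ) - 1) + r) = h := by
  rw [hh_eq_ediv _ (by omega), show (h - 1) * ((n : ℤ) - 1) + r - 1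
      = (r - 1) + (h - 1) * ((n : ℤ) - 1) by ring,
    Int.add_mul_ediv_right _ _ (by omega), Int.ediv_eq_zero_of_lt (by omega) (by omega)]
  ring

lemma rr_zero (hn : 2 ≤ n) : rr n 0 = (n : ℤ) - 1 := by
  have := hh_sub_one_mul_add (n := n) hn 0 (r := (n : ℤ) - 1) (by omega) le_rfl
  rw [show ((0 : ℤ) - 1) * ((n : ℤ) - 1) + ((n : ℤ) - 1) = 0 by ring] at this
  rw [rr, this]
  ring

theorem WD_lt_rr_of_mem_Lset (hn : 3 ≤ n) {i : ℤ} (hi : 1 ≤ i) {p : (ℕ →₀ ℕ) × ℕ}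
    (hp : p ∈ Lset n i) : WD n p.1 p.2 < rr n i := by
  obtain ⟨-, hlev, hmin⟩ := hp
  set w := WD n p.1 p.2
  set d : ℤ := (deg p.1 : ℤ)
  set h := hh n i
  set r := rr n i
  have hi_eq : (h - 1) * ((n : ℤ) - 1) + r = i := hh_sub_one_mul_add_rr n i
  have hlev : h * w + d - 1 = i := hlev
  have hr1 : 1 ≤ r := one_le_rr i (by omega)
  have hr2 : r ≤ (n : ℤ) - 1 := rr_le i (by omega)
  have hh1 : 1 ≤ h := one_le_hh hi (by omega)
  have hd : 0 ≤ d := Int.natCast_nonneg _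
  by_contra! hwr
  -- `hlev` and `hi_eq` give `h * (n - 1 - w) = n - 2 - r + d`, and `h ≥ 1`.
  have hw_le : w ≤ (n : ℤ) - 2 + r := by
    by_contra! hw
    nlinarith
  have hhj : hh n (i - w) = h - 1 := by
    have := hh_sub_one_mul_add (n := n) (by omega) (h - 1) (r := (n : ℤ) - 1 + r - w)
      (by omega) (by omega)
    rwa [show (h - 1 - 1) * ((n : ℤ) - 1) + ((n : ℤ) - 1 + r - w) = i - w by linarith] at this
  have hlevj : lev n (i - w) p.1 p.2 = i - w := by
    simp only [lev, hhj]
    linarith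
  have := hmin (i - w) (by nlinarith) hlevj
  omega

end Levels

lemma isBasisElt_single_one (c : ℕ) {n : ℕ} (hn : 2 ≤ n) : IsBasisElt n (single 1 c) n :=
  ⟨by omega, le_rfl, by simp, fun m hm => single_eq_of_ne (show m ≠ 1 by omega)⟩

theorem stmt9 (n : ℕ) (hn : 3 ≤ n) (t : ℤ) (ht : 0 ≤ t) (hr : rr n t = 1) :
    Lset n t = {(Finsupp.single 1 (t.toNat + 1), n)} := by
  have ht1 : 1 ≤ t := by
    rcases ht.lt_or_eq with ht | rfl
    · exact ht
    rw [rr_zero (by omega)] at hr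
    omega
  ext ⟨Λ, k⟩
  simp only [Set.mem_singleton_iff, Prod.mk.injEq]
  constructor
  · intro hp
    have hb : IsBasisElt n Λ k := hp.1
    have hw : WD n Λ k = 0 :=
      le_antisymm (by linarith [WD_lt_rr_of_mem_Lset hn ht1 hp]) (WD_nonneg hb)
    obtain ⟨hwt, hk⟩ := (WD_eq_zero_iff hb).mp hw
    have hdeg := (mem_Lset_iff_of_WD_eq_zero hb hw).mp hp
    have hΛ := eq_single_one_of_wt_eq_deg hb.2.2.1 hwt
    refine ⟨?_, hk⟩
    rw [hΛ, deg_single] at hdeg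
    rw [hΛ]
    congr
    omega
  · rintro ⟨rfl, hk⟩
    subst k
    have hb := isBasisElt_single_one (t.toNat + 1) (by omega : 2 ≤ n)
    refine (mem_Lset_iff_of_WD_eq_zero hb ?_).mpr ?_
    · exact (WD_eq_zero_iff hb).mpr ⟨by rw [wt_single_one, deg_single], rfl⟩
    · rw [deg_single]
      omega
end
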